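/- arXiv:1905.00380 — 3 statements merged into one kernel-verified Lean document; each statement's English description precedes it below -/
import Mathlib

section
/- Let $(\Omega_1, d_1)$ and $(\Omega_2, d_2)$ be complete separable metric spaces. Let $X$ be a random variable taking values in $\Omega_1$ and let $\{Y^n\}_{n\in\mathbb{N}}$ and $Y$ be random variables taking values in $\Omega_2$, all defined on the same probability space, such that $(X, Y^n) \to (X, Y)$ in law. If $Y$ is almost surely equal to a measurable function of $X$, then $Y^n \to Y$ in probability. -/
open MeasureTheory Filter Topology

/-- If `(X, Yⁿ) → (X, Y)` in law (tested against bounded continuous functions on the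
product of two complete separable metric spaces), and `Y` is a.s. equal to a measurable
function of `X`, then `Yⁿ → Y` in probability. -/
theorem convergence_in_law_to_in_probability
    {Ω : Type*} [MeasurableSpace Ω] (P : Measure Ω) [IsProbabilityMeasure P]
    {Ω₁ : Type*} [MetricSpace Ω₁] [CompleteSpace Ω₁] [TopologicalSpace.SeparableSpace Ω₁]
    [MeasurableSpace Ω₁] [BorelSpace Ω₁]
    {Ω₂ : Type*} [MetricSpace Ω₂] [CompleteSpace Ω₂] [TopologicalSpace.SeparableSpace Ω₂]
    [MeasurableSpace Ω₂] [BorelSpace Ω₂]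
    (X : Ω → Ω₁) (Y : Ω → Ω₂) (Yn : ℕ → Ω → Ω₂)
    (hX : Measurable X) (hY : Measurable Y) (hYn : ∀ n, Measurable (Yn n))
    (hconv : ∀ g : BoundedContinuousFunction (Ω₁ × Ω₂) ℝ,
      Tendsto (fun n => ∫ ω, g (X ω, Yn n ω) ∂P) atTop (𝓝 (∫ ω, g (X ω, Y ω) ∂P)))
    (f : Ω₁ → Ω₂) (hf : Measurable f) (hYf : Y =ᵐ[P] fun ω => f (X ω)) :
    ∀ ε > (0 : ℝ), Tendsto (fun n => P {ω | ε < dist (Yn n ω) (Y ω)}) atTop (𝓝 0) := by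
  haveI : SecondCountableTopology Ω₁ := UniformSpace.secondCountable_of_separable Ω₁
  haveI : SecondCountableTopology Ω₂ := UniformSpace.secondCountable_of_separable Ω₂
  intro ε hε
  -- The underlying space is nonempty.
  have hΩ : Nonempty Ω := by
    by_contra h
    rw [not_nonempty_iff] at h
    have h1 : P Set.univ = 1 := measure_univ
    rw [Set.univ_eq_empty_iff.mpr h, measure_empty] at h1
    exact zero_ne_one h1
  obtain ⟨ω₀⟩ := hΩ
  set y₀ : Ω₂ := f (X ω₀) with hy₀
  -- approximating simple functions
  set g : ℕ → SimpleFunc Ω₁ Ω₂ :=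
    fun k => SimpleFunc.approxOn f hf Set.univ y₀ (Set.mem_univ _) k with hg
  have hg_tendsto : ∀ x, Tendsto (fun k => g k x) atTop (𝓝 (f x)) := fun x =>
    SimpleFunc.tendsto_approxOn hf (Set.mem_univ _) (by simp)
  have hinm : TendstoInMeasure P (fun k ω => g k (X ω)) atTop (fun ω => f (X ω)) :=
    tendstoInMeasure_of_tendsto_ae
      (fun k => ((g k).measurable.comp hX).aestronglyMeasurable)
      (ae_of_all _ fun ω => hg_tendsto (X ω))
  rw [ENNReal.tendsto_atTop_zero]
  intro δ hδ
  set δ' : ENNReal := min δ 1 with hδ'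
  have hδ'0 : δ' ≠ 0 := (lt_min hδ zero_lt_one).ne'
  have hδ'top : δ' ≠ ⊤ := ((min_le_right δ 1).trans_lt ENNReal.one_lt_top).ne
  set η : ENNReal := δ' / 4 with hη
  have hη0 : η ≠ 0 := by
    simp only [hη, ne_eq, ENNReal.div_eq_zero_iff, not_or]
    exact ⟨hδ'0, by norm_num⟩
  have hηtop : η ≠ ⊤ := by
    simp only [hη]
    exact (ENNReal.div_lt_top hδ'top (by norm_num)).ne
  -- choose a good simple approximation
  have hε4 : (0:ℝ) < ε / 4 := by linarith
  obtain ⟨k, hk⟩ := ((tendstoInMeasure_iff_dist.mp hinm (ε/4) hε4).eventually_lt_const hη0.bot_lt).exists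
  -- hk : P {ω | ε/4 ≤ dist (g k (X ω)) (f (X ω))} < η
  set G : SimpleFunc Ω₁ Ω₂ := g k with hG
  set μ : Measure Ω₁ := P.map X with hμ
  haveI : IsProbabilityMeasure μ := Measure.isProbabilityMeasure_map hX.aemeasurable
  -- inner regularity: closed subsets of the fibers of G
  set m : ℕ := G.range.card with hm
  have hreg : ∀ c : Ω₂, ∃ F, F ⊆ G ⁻¹' {c} ∧ IsClosed F ∧
      μ (G ⁻¹' {c} \ F) < η / (m + 1) := by
    intro c
    refine (G.measurableSet_fiber c).exists_isClosed_diff_lt (measure_ne_top μ _) ?_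
    simp only [ne_eq, ENNReal.div_eq_zero_iff, not_or]
    refine ⟨hη0, ?_⟩
    exact (ENNReal.add_ne_top.mpr ⟨ENNReal.natCast_ne_top m, ENNReal.one_ne_top⟩)
  choose F hFsub hFclosed hFlt using hreg
  set U : Set Ω₁ := ⋃ c ∈ G.range, F c with hU
  have hUclosed : IsClosed U := by
    exact Set.Finite.isClosed_biUnion G.range.finite_toSet (fun c _ => hFclosed c)
  have hUc : μ Uᶜ ≤ η := by
    have hsub : Uᶜ ⊆ ⋃ c ∈ G.range, (G ⁻¹' {c} \ F c) := by
      intro x hx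
      refine Set.mem_biUnion (G.mem_range_self x) ⟨rfl, ?_⟩
      intro hxF
      exact hx (Set.mem_biUnion (G.mem_range_self x) hxF)
    calc μ Uᶜ ≤ ∑ c ∈ G.range, μ (G ⁻¹' {c} \ F c) :=
          (measure_mono hsub).trans (measure_biUnion_finset_le _ _)
      _ ≤ ∑ _c ∈ G.range, η / (m + 1) :=
          Finset.sum_le_sum (fun c _ => (hFlt c).le)
      _ = (m : ENNReal) * (η / (m + 1)) := by
          rw [Finset.sum_const, hm]; simp [nsmul_eq_mul]
      _ ≤ ((m : ENNReal) + 1) * (η / (m + 1)) := by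
          gcongr; exact le_self_add
      _ = η := by
          rw [ENNReal.mul_div_cancel']
          · exact fun h => absurd h (by positivity)
          · exact fun h => absurd h (ENNReal.add_ne_top.mpr ⟨ENNReal.natCast_ne_top m, ENNReal.one_ne_top⟩)
  -- the closed bad set in the product
  set A : Set (Ω₁ × Ω₂) := ⋃ c ∈ G.range, (F c) ×ˢ {y : Ω₂ | ε/2 ≤ dist y c} with hA
  have hAclosed : IsClosed A := by
    refine Set.Finite.isClosed_biUnion G.range.finite_toSet (fun c _ => ?_)
    exact (hFclosed c).prod (isClosed_le continuous_const (continuous_id.dist continuous_const))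
  have hAmeas : MeasurableSet A := hAclosed.measurableSet
  -- convergence in law as probability measures
  set ν : ℕ → ProbabilityMeasure (Ω₁ × Ω₂) := fun n =>
    ⟨P.map (fun ω => (X ω, Yn n ω)),
      Measure.isProbabilityMeasure_map ((hX.prodMk (hYn n)).aemeasurable)⟩ with hν
  set ν' : ProbabilityMeasure (Ω₁ × Ω₂) :=
    ⟨P.map (fun ω => (X ω, Y ω)), Measure.isProbabilityMeasure_map ((hX.prodMk hY).aemeasurable)⟩
      with hν'
  have hνconv : Tendsto ν atTop (𝓝 ν') := by
    rw [ProbabilityMeasure.tendsto_iff_forall_integral_tendsto]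
    intro h
    have h1 : ∀ n, ∫ p, h p ∂(ν n : Measure (Ω₁ × Ω₂)) = ∫ ω, h (X ω, Yn n ω) ∂P := by
      intro n
      exact integral_map ((hX.prodMk (hYn n)).aemeasurable)
        h.continuous.aestronglyMeasurable
    have h2 : ∫ p, h p ∂(ν' : Measure (Ω₁ × Ω₂)) = ∫ ω, h (X ω, Y ω) ∂P :=
      integral_map ((hX.prodMk hY).aemeasurable) h.continuous.aestronglyMeasurable
    simp only [h1, h2]
    exact hconv h
  -- the limit measure gives A small mass
  have hν'A : (ν' : Measure (Ω₁ × Ω₂)) A ≤ η := by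
    show (P.map (fun ω => (X ω, Y ω))) A ≤ η
    rw [Measure.map_apply (hX.prodMk hY) hAmeas]
    refine le_of_lt (lt_of_le_of_lt (measure_mono_ae ?_) hk)
    filter_upwards [hYf] with ω hω hmem
    obtain ⟨c, hcr, hmem2⟩ := Set.mem_iUnion₂.mp hmem
    obtain ⟨hXF, hdist⟩ := hmem2
    have hc : G (X ω) = c := hFsub c hXF
    have hdist' : ε/2 ≤ dist (Y ω) c := hdist
    rw [hω] at hdist'
    show ε/4 ≤ dist (G (X ω)) (f (X ω))
    rw [hc, dist_comm]
    linarith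
  -- portmanteau
  have hlimsup : (atTop.limsup fun n => (ν n : Measure (Ω₁ × Ω₂)) A) ≤ η :=
    (ProbabilityMeasure.limsup_measure_closed_le_of_tendsto hνconv hAclosed).trans hν'A
  have hev : ∀ᶠ n in atTop, (ν n : Measure (Ω₁ × Ω₂)) A < 2 * η := by
    refine eventually_lt_of_limsup_lt (lt_of_le_of_lt hlimsup ?_)
    rw [two_mul]
    exact ENNReal.lt_add_right hηtop hη0
  rw [eventually_atTop] at hev
  obtain ⟨N, hN⟩ := hev
  refine ⟨N, fun n hn => ?_⟩
  -- the a.e. inclusion into three bad sets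
  have hincl : ({ω | ε < dist (Yn n ω) (Y ω)} : Set Ω) ≤ᵐ[P]
      (({ω | ε/4 ≤ dist (G (X ω)) (f (X ω))} ∪ (X ⁻¹' Uᶜ)
        ∪ ((fun ω => (X ω, Yn n ω)) ⁻¹' A)) : Set Ω) := by
    filter_upwards [hYf] with ω hω hS
    by_cases h1 : ε/4 ≤ dist (G (X ω)) (f (X ω))
    · exact Or.inl (Or.inl h1)
    by_cases h2 : X ω ∈ U
    · refine Or.inr ?_
      obtain ⟨c, hcr, hXF⟩ := Set.mem_iUnion₂.mp h2
      have hc : G (X ω) = c := hFsub c hXF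
      push_neg at h1
      have hS0 : ε < dist (Yn n ω) (Y ω) := hS
      have hS' : ε < dist (Yn n ω) (f (X ω)) := by rwa [hω] at hS0
      have htri : dist (Yn n ω) (f (X ω)) ≤ dist (Yn n ω) c + dist c (f (X ω)) :=
        dist_triangle _ _ _
      have hcf : dist c (f (X ω)) < ε/4 := by
        rw [← hc]; exact h1
      have : ε/2 ≤ dist (Yn n ω) c := by linarith
      show (X ω, Yn n ω) ∈ A
      exact Set.mem_iUnion₂.mpr ⟨c, hcr, hXF, this⟩
    · exact Or.inl (Or.inr h2)
  calc P {ω | ε < dist (Yn n ω) (Y ω)}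
      ≤ P ({ω | ε/4 ≤ dist (G (X ω)) (f (X ω))} ∪ (X ⁻¹' Uᶜ)
        ∪ ((fun ω => (X ω, Yn n ω)) ⁻¹' A)) := measure_mono_ae hincl
    _ ≤ P ({ω | ε/4 ≤ dist (G (X ω)) (f (X ω))} ∪ (X ⁻¹' Uᶜ))
        + P ((fun ω => (X ω, Yn n ω)) ⁻¹' A) := measure_union_le _ _
    _ ≤ P {ω | ε/4 ≤ dist (G (X ω)) (f (X ω))} + P (X ⁻¹' Uᶜ)
        + P ((fun ω => (X ω, Yn n ω)) ⁻¹' A) := by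
        gcongr
        exact measure_union_le _ _
    _ ≤ η + η + 2 * η := by
        refine add_le_add (add_le_add ?_ ?_) ?_
        · exact hk.le
        · rw [← Measure.map_apply hX hUclosed.measurableSet.compl]
          exact hUc
        · have := hN n hn
          rw [show ((ν n : Measure (Ω₁ × Ω₂)) A)
            = (P.map (fun ω => (X ω, Yn n ω))) A from rfl,
            Measure.map_apply (hX.prodMk (hYn n)) hAmeas] at this
          exact this.le
    _ = 4 * η := by ring
    _ = δ' := by
        rw [hη, ENNReal.mul_div_cancel'] <;> norm_num
    _ ≤ δ := min_le_left _ _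
end

section
/- Let $X$ be a compact topological space and let $\{D^n\}_{n \in \mathbb{N}}$ be a sequence of length metrics on $X$, each inducing the topology of $X$, which converge uniformly (as functions on $X \times X$) to a metric $D$ on $X$ that also induces the topology of $X$. Then $D$ is a length metric on $X$. -/
open scoped ENNReal

/-- The total variation of a path `P` on a set `s ⊆ ℝ` with respect to an abstract
extended distance function `d`. -/
noncomputable def pathVar {X : Type*} (d : X → X → ℝ≥0∞) (P : ℝ → X) (s : Set ℝ) : ℝ≥0∞ :=
  ⨆ p : ℕ × { u : ℕ → ℝ // Monotone u ∧ ∀ i, u i ∈ s },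
    ∑ i ∈ Finset.range p.1, d (P (p.2.1 i)) (P (p.2.1 (i + 1)))

/-- `d` is a metric (distance function) on the whole space. -/
def IsMetric {X : Type*} (d : X → X → ℝ) : Prop :=
  (∀ x y, d x y = d y x) ∧ (∀ x y z, d x z ≤ d x y + d y z) ∧
  (∀ x y, (d x y = 0 ↔ x = y)) ∧ (∀ x y, 0 ≤ d x y)

/-- `d` induces the given topology on `X`. -/
def InducesTopology {X : Type*} [TopologicalSpace X] (d : X → X → ℝ) : Prop :=
  ∀ s : Set X, IsOpen s ↔ ∀ x ∈ s, ∃ ε > (0 : ℝ), {y | d x y < ε} ⊆ s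

/-- `d` is a length metric: distances are approximated by lengths of continuous paths. -/
def IsLengthMetric {X : Type*} [TopologicalSpace X] (d : X → X → ℝ) : Prop :=
  ∀ x y : X, ∀ ε > (0 : ℝ), ∃ P : ℝ → X,
    ContinuousOn P (Set.Icc 0 1) ∧ P 0 = x ∧ P 1 = y ∧
    pathVar (fun a b => ENNReal.ofReal (d a b)) P (Set.Icc 0 1) ≤
      ENNReal.ofReal (d x y + ε)

section Aux

variable {X : Type*} [TopologicalSpace X]

lemma cont_of_isMetric {d : X → X → ℝ} (hm : IsMetric d) (ht : InducesTopology d) (x : X) :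
    Continuous fun y => d x y := by
  obtain ⟨hsymm, htri, hzero, hnn⟩ := hm
  rw [continuous_iff_continuousAt]
  intro y₀
  rw [ContinuousAt, Metric.tendsto_nhds]
  intro ε hε
  have hopen : IsOpen {y | d y₀ y < ε} := by
    rw [ht]
    intro z hz
    have hz' : d y₀ z < ε := hz
    refine ⟨ε - d y₀ z, by linarith, fun w hw => ?_⟩
    have hw' : d z w < ε - d y₀ z := hw
    show d y₀ w < ε
    have := htri y₀ z w
    linarith
  have hmem : y₀ ∈ {y | d y₀ y < ε} := by
    show d y₀ y₀ < ε
    rw [(hzero y₀ y₀).mpr rfl]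
    exact hε
  filter_upwards [hopen.mem_nhds hmem] with y hy
  have hy' : d y₀ y < ε := hy
  rw [Real.dist_eq, abs_lt]
  have h1 := htri x y₀ y
  have h2 := htri x y y₀
  have h3 := hsymm y y₀
  constructor <;> linarith

lemma exists_approx_midpoint {D : ℕ → X → X → ℝ} {Dlim : X → X → ℝ}
    (hDn_metric : ∀ n, IsMetric (D n)) (hDn_top : ∀ n, InducesTopology (D n))
    (hDn_length : ∀ n, IsLengthMetric (D n))
    (hconv : TendstoUniformly (fun n (p : X × X) => D n p.1 p.2)
      (fun p : X × X => Dlim p.1 p.2) Filter.atTop)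
    (x y : X) (δ : ℝ) (hδ : 0 < δ) :
    ∃ z, Dlim x z ≤ Dlim x y / 2 + δ ∧ Dlim z y ≤ Dlim x y / 2 + δ := by
  have h4 : (0:ℝ) < δ / 4 := by linarith
  rw [Metric.tendstoUniformly_iff] at hconv
  obtain ⟨n, hn⟩ := (hconv (δ/4) h4).exists
  have hclose : ∀ a b : X, |Dlim a b - D n a b| < δ/4 := by
    intro a b
    have := hn (a, b)
    rwa [Real.dist_eq] at this
  obtain ⟨hsymm, htri, hzero, hnn⟩ := hDn_metric n
  obtain ⟨P, hPc, hP0, hP1, hPvar⟩ := hDn_length n x y (δ/4) h4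
  have hf : ContinuousOn (fun t => D n x (P t)) (Set.Icc 0 1) :=
    (cont_of_isMetric (hDn_metric n) (hDn_top n) x).comp_continuousOn hPc
  have hiv := intermediate_value_Icc (by norm_num : (0:ℝ) ≤ 1) hf
  have hmem : D n x y / 2 ∈ Set.Icc ((fun t => D n x (P t)) 0) ((fun t => D n x (P t)) 1) := by
    simp only [hP0, hP1, (hzero x x).mpr rfl]
    exact ⟨by linarith [hnn x y], by linarith [hnn x y]⟩
  obtain ⟨t, ht, hft⟩ := hiv hmem
  simp only at hft
  have hu : ∀ i : ℕ, (if i = 0 then (0:ℝ) else if i = 1 then t else 1) ∈ Set.Icc (0:ℝ) 1 := by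
    intro i
    match i with
    | 0 => simp
    | 1 => simpa using ht
    | (i+2) => simp
  have humono : Monotone (fun i : ℕ => if i = 0 then (0:ℝ) else if i = 1 then t else 1) := by
    apply monotone_nat_of_le_succ
    intro i
    match i with
    | 0 => simpa using ht.1
    | 1 => simpa using ht.2
    | (i+2) => simp
  have hle : ∑ i ∈ Finset.range 2, ENNReal.ofReal
      (D n (P ((fun i : ℕ => if i = 0 then (0:ℝ) else if i = 1 then t else 1) i))
           (P ((fun i : ℕ => if i = 0 then (0:ℝ) else if i = 1 then t else 1) (i+1)))) ≤
      pathVar (fun a b => ENNReal.ofReal (D n a b)) P (Set.Icc 0 1) :=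
    le_iSup (fun p : ℕ × {v : ℕ → ℝ // Monotone v ∧ ∀ i, v i ∈ Set.Icc (0:ℝ) 1} =>
      ∑ i ∈ Finset.range p.1, ENNReal.ofReal (D n (P (p.2.1 i)) (P (p.2.1 (i+1)))))
      ⟨2, ⟨_, humono, hu⟩⟩
  rw [Finset.sum_range_succ, Finset.sum_range_one] at hle
  norm_num at hle
  rw [hP0, hP1] at hle
  have hle2 := le_trans hle hPvar
  rw [← ENNReal.ofReal_add (hnn x (P t)) (hnn (P t) y)] at hle2
  rw [ENNReal.ofReal_le_ofReal_iff (by linarith [hnn x y])] at hle2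
  have hc1 := abs_lt.mp (hclose x (P t))
  have hc2 := abs_lt.mp (hclose (P t) y)
  have hc3 := abs_lt.mp (hclose x y)
  exact ⟨P t, by linarith, by linarith⟩

end Aux

/-- A uniform limit of length metrics on a compact space, each inducing the topology,
is itself a length metric (provided the limit is a metric inducing the topology). -/
theorem uniform_limit_of_length_metrics_is_length_metric
    {X : Type*} [TopologicalSpace X] [CompactSpace X]
    (D : ℕ → X → X → ℝ) (Dlim : X → X → ℝ)
    (hDn_metric : ∀ n, IsMetric (D n))
    (hDn_top : ∀ n, InducesTopology (D n))
    (hDn_length : ∀ n, IsLengthMetric (D n))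
    (hD_metric : IsMetric Dlim)
    (hD_top : InducesTopology Dlim)
    (hconv : TendstoUniformly (fun n (p : X × X) => D n p.1 p.2)
      (fun p : X × X => Dlim p.1 p.2) Filter.atTop) :
    IsLengthMetric Dlim := by
  obtain ⟨hsymm, htri, hzero, hnn⟩ := hD_metric
  intro x y ε hε
  obtain ⟨L, hL⟩ : ∃ L : ℝ, L = Dlim x y := ⟨_, rfl⟩
  have hL0 : 0 ≤ L := hL ▸ hnn x y
  have hLε : (0:ℝ) ≤ L + ε := by linarith
  letI m : MetricSpace X := MetricSpace.ofDistTopology Dlim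
    (fun a => (hzero a a).mpr rfl) hsymm htri
    (fun s => (hD_top s).trans (forall₂_congr (fun a _ => exists_congr (fun ε' =>
      and_congr_right (fun _ => ⟨fun h b hb => h hb, fun h b hb => h b hb⟩)))))
    (fun a b h => (hzero a b).mp h)
  haveI : CompleteSpace X := complete_of_compact
  have hmid : ∀ (a b : X) (δ : ℝ), 0 < δ →
      ∃ z, Dlim a z ≤ Dlim a b / 2 + δ ∧ Dlim z b ≤ Dlim a b / 2 + δ :=
    fun a b δ hδ => exists_approx_midpoint hDn_metric hDn_top hDn_length hconv a b δ hδ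
  let mid : X → X → ℝ → X := fun a b δ => if h : 0 < δ then (hmid a b δ h).choose else a
  have hmid1 : ∀ a b δ, 0 < δ → Dlim a (mid a b δ) ≤ Dlim a b / 2 + δ := by
    intro a b δ h
    simp only [mid, dif_pos h]
    exact (hmid a b δ h).choose_spec.1
  have hmid2 : ∀ a b δ, 0 < δ → Dlim (mid a b δ) b ≤ Dlim a b / 2 + δ := by
    intro a b δ h
    simp only [mid, dif_pos h]
    exact (hmid a b δ h).choose_spec.2
  let f : ℕ → ℕ → X := fun k => Nat.rec (motive := fun _ => ℕ → X)
    (fun j => if j = 0 then x else y)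
    (fun k fk j => if j % 2 = 0 then fk (j / 2)
      else mid (fk (j / 2)) (fk (j / 2 + 1)) (ε * (1/4) ^ (k + 1))) k
  have hf0 : ∀ j, f 0 j = if j = 0 then x else y := fun _ => rfl
  have hstep : ∀ k j, f (k+1) j = if j % 2 = 0 then f k (j / 2)
      else mid (f k (j / 2)) (f k (j / 2 + 1)) (ε * (1/4) ^ (k + 1)) := fun _ _ => rfl
  obtain ⟨A, hA⟩ : ∃ A : ℕ → ℝ, ∀ k, A k = (L + ε) * (1/2) ^ k - ε * (1/4) ^ k :=
    ⟨_, fun _ => rfl⟩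
  have hhalf : ∀ k : ℕ, ((1:ℝ)/4) ^ k ≤ (1/2) ^ k := fun k =>
    pow_le_pow_left₀ (by norm_num) (by norm_num) k
  have hA0 : ∀ k, 0 ≤ A k := by
    intro k
    have h1 := hhalf k
    have h2 : (0:ℝ) ≤ (1/4:ℝ)^k := by positivity
    simp only [hA]
    nlinarith
  have hAle : ∀ k, A k ≤ (L + ε) * (1/2) ^ k := by
    intro k
    have h2 : (0:ℝ) ≤ ε * (1/4:ℝ)^k := by positivity
    simp only [hA]; linarith
  have hArec : ∀ k : ℕ, A k / 2 + ε * (1/4) ^ (k+1) = A (k+1) := by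
    intro k
    simp only [hA]
    ring
  have key : ∀ k j, Dlim (f k j) (f k (j+1)) ≤ A k := by
    intro k
    induction k with
    | zero =>
      intro j
      match j with
      | 0 =>
        have e0 : f 0 0 = x := by rw [hf0]; norm_num
        have e1 : f 0 1 = y := by rw [hf0]; norm_num
        have hA0eq : A 0 = L := by rw [hA]; norm_num
        rw [e0, e1, hA0eq, ← hL]
      | (j+1) =>
        have e1 : f 0 (j+1) = y := by rw [hf0]; norm_num
        have e2 : f 0 (j+2) = y := by rw [hf0]; norm_num
        rw [e1, e2]
        exact le_trans (le_of_eq ((hzero y y).mpr rfl)) (hA0 0)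
    | succ k ih =>
      intro j
      have hepos : (0:ℝ) < ε * (1/4:ℝ)^(k+1) := by positivity
      rcases Nat.even_or_odd j with ⟨c, hc⟩ | ⟨c, hc⟩
      · subst hc
        have hcc : c + c = 2*c := by omega
        rw [hcc]
        have e1 : f (k+1) (2*c) = f k c := by
          rw [hstep, if_pos (by omega : (2*c) % 2 = 0)]
          congr 1
          omega
        have e2 : f (k+1) (2*c+1) = mid (f k c) (f k (c+1)) (ε * (1/4)^(k+1)) := by
          rw [hstep]
          rw [if_neg (by omega : ¬ (2*c+1) % 2 = 0)]
          congr 2 <;> omega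
        rw [e1, e2]
        have h1 := hmid1 (f k c) (f k (c+1)) _ hepos
        have h2 := ih c
        have h3 := hArec k
        linarith
      · subst hc
        have e1 : f (k+1) (2*c+1) = mid (f k c) (f k (c+1)) (ε * (1/4)^(k+1)) := by
          rw [hstep]
          rw [if_neg (by omega : ¬ (2*c+1) % 2 = 0)]
          congr 2 <;> omega
        have e2 : f (k+1) (2*c+1+1) = f k (c+1) := by
          rw [hstep, if_pos (by omega : (2*c+1+1) % 2 = 0)]
          congr 1
          omega
        rw [e1, e2]
        have h1 := hmid2 (f k c) (f k (c+1)) _ hepos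
        have h2 := ih c
        have h3 := hArec k
        linarith
  have key2 : ∀ k i j, i ≤ j → Dlim (f k i) (f k j) ≤ ((j:ℝ) - i) * A k := by
    intro k i j hij
    induction j, hij using Nat.le_induction with
    | base => rw [(hzero _ _).mpr rfl, sub_self, zero_mul]
    | succ j hij ih =>
      have h1 := htri (f k i) (f k j) (f k (j+1))
      have h2 := key k j
      push_cast
      have h3 : ((j:ℝ)+1-(i:ℝ)) * A k = ((j:ℝ)-(i:ℝ))*A k + A k := by ring
      rw [h3]
      linarith
  have hfk0 : ∀ k, f k 0 = x := by
    intro k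
    induction k with
    | zero => rw [hf0]; norm_num
    | succ k ih =>
      rw [hstep, if_pos (by omega : 0 % 2 = 0)]
      simpa using ih
  have hfk1 : ∀ k, f k (2^k) = y := by
    intro k
    induction k with
    | zero => rw [pow_zero, hf0]; norm_num
    | succ k ih =>
      rw [pow_succ, hstep, if_pos (Nat.mul_mod_left (2^k) 2),
        Nat.mul_div_cancel _ (by norm_num : 0 < 2)]
      exact ih
  let g : ℕ → ℝ → X := fun k t => f k ⌊t * 2^k⌋₊
  have hg : ∀ k t, g k t = f k ⌊t * 2^k⌋₊ := fun _ _ => rfl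
  have hfloor2 : ∀ a : ℝ, 2 * ⌊a⌋₊ ≤ ⌊2*a⌋₊ ∧ ⌊2*a⌋₊ ≤ 2*⌊a⌋₊ + 1 := by
    intro a
    rcases le_or_gt a 0 with ha | ha
    · have h1 : ⌊a⌋₊ = 0 := Nat.floor_eq_zero.mpr (by linarith)
      have h2 : ⌊2*a⌋₊ = 0 := Nat.floor_eq_zero.mpr (by linarith)
      rw [h1, h2]
      omega
    · constructor
      · apply Nat.le_floor
        push_cast
        have := Nat.floor_le ha.le
        linarith
      · have h2 : (0:ℝ) ≤ 2*a := by linarith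
        have h3 : ⌊2*a⌋₊ < 2*⌊a⌋₊ + 2 := by
          rw [Nat.floor_lt h2]
          push_cast
          linarith [Nat.lt_floor_add_one a]
        omega
  have hgstep : ∀ k t, Dlim (g k t) (g (k+1) t) ≤ (L+ε) * (1/2:ℝ)^(k+1) := by
    intro k t
    obtain ⟨hlo, hhi⟩ := hfloor2 (t * 2^k)
    have hmul : 2 * (t * 2^k) = t * 2^(k+1) := by ring
    rw [hmul] at hlo hhi
    have e1 : f (k+1) (2 * ⌊t * 2^k⌋₊) = f k ⌊t * 2^k⌋₊ := by
      rw [hstep, if_pos (by omega : (2 * ⌊t * 2^k⌋₊) % 2 = 0)]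
      congr 1
      omega
    rw [hg k t, hg (k+1) t, ← e1]
    have h1 := key2 (k+1) (2*⌊t * 2^k⌋₊) ⌊t * 2^(k+1)⌋₊ hlo
    have h2 : ((⌊t * 2^(k+1)⌋₊:ℝ) - ((2*⌊t * 2^k⌋₊ : ℕ):ℝ)) ≤ 1 := by
      have : (⌊t * 2^(k+1)⌋₊ : ℝ) ≤ 2*(⌊t * 2^k⌋₊:ℝ) + 1 := by exact_mod_cast hhi
      push_cast
      linarith
    have h3 := hA0 (k+1)
    have h4 := hAle (k+1)
    calc Dlim (f (k+1) (2*⌊t * 2^k⌋₊)) (f (k+1) ⌊t * 2^(k+1)⌋₊)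
        ≤ ((⌊t * 2^(k+1)⌋₊:ℝ) - ((2*⌊t * 2^k⌋₊ : ℕ):ℝ)) * A (k+1) := h1
      _ ≤ 1 * A (k+1) := mul_le_mul_of_nonneg_right h2 h3
      _ = A (k+1) := one_mul _
      _ ≤ (L+ε)*(1/2:ℝ)^(k+1) := h4
  have hchain : ∀ (t : ℝ) k l, k ≤ l →
      Dlim (g k t) (g l t) ≤ (L+ε) * ((1/2:ℝ)^k - (1/2:ℝ)^l) := by
    intro t k l hkl
    induction l, hkl using Nat.le_induction with
    | base => rw [(hzero _ _).mpr rfl, sub_self, mul_zero]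
    | succ l hkl ih =>
      have h1 := htri (g k t) (g l t) (g (l+1) t)
      have h2 := hgstep l t
      have h3 : (L+ε)*((1/2:ℝ)^k - (1/2:ℝ)^l) + (L+ε)*(1/2:ℝ)^(l+1)
          = (L+ε)*((1/2:ℝ)^k - (1/2:ℝ)^(l+1)) := by ring
      linarith
  have hcs : ∀ t : ℝ, CauchySeq (fun k => g k t) := by
    intro t
    apply cauchySeq_of_le_tendsto_0 (fun N => 2*(L+ε)*(1/2:ℝ)^N)
    · intro a b N ha hb
      have h1 := hchain t N a ha
      have h2 := hchain t N b hb
      have h3 := htri (g a t) (g N t) (g b t)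
      have h4 : Dlim (g a t) (g N t) = Dlim (g N t) (g a t) := hsymm _ _
      rw [mul_sub] at h1 h2
      have h5 : (0:ℝ) ≤ (L+ε)*(1/2:ℝ)^a := by positivity
      have h6 : (0:ℝ) ≤ (L+ε)*(1/2:ℝ)^b := by positivity
      show Dlim (g a t) (g b t) ≤ 2*(L+ε)*(1/2:ℝ)^N
      nlinarith
    · have h := (tendsto_pow_atTop_nhds_zero_of_lt_one
        (by norm_num : (0:ℝ) ≤ 1/2) (by norm_num : (1/2:ℝ) < 1)).const_mul (2*(L+ε))
      simpa using h
  have hPlim : ∀ t : ℝ, ∃ z, Filter.Tendsto (fun k => g k t) Filter.atTop (nhds z) :=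
    fun t => cauchySeq_tendsto_of_complete (hcs t)
  let P : ℝ → X := fun t => (hPlim t).choose
  have hP : ∀ t, Filter.Tendsto (fun k => g k t) Filter.atTop (nhds (P t)) :=
    fun t => (hPlim t).choose_spec
  have hP0 : P 0 = x := by
    have hg0 : ∀ k : ℕ, g k 0 = x := by
      intro k
      rw [hg, zero_mul, Nat.floor_zero]
      exact hfk0 k
    exact tendsto_nhds_unique (hP 0)
      (by rw [Filter.tendsto_congr hg0]; exact tendsto_const_nhds)
  have hP1 : P 1 = y := by
    have hg1 : ∀ k : ℕ, g k 1 = y := by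
      intro k
      rw [hg, one_mul]
      have e : ((2:ℝ))^k = ((2^k : ℕ) : ℝ) := by push_cast; ring
      rw [e, Nat.floor_natCast]
      exact hfk1 k
    exact tendsto_nhds_unique (hP 1)
      (by rw [Filter.tendsto_congr hg1]; exact tendsto_const_nhds)
  have hlip : ∀ s t : ℝ, s ∈ Set.Icc (0:ℝ) 1 → t ∈ Set.Icc (0:ℝ) 1 → s ≤ t →
      Dlim (P s) (P t) ≤ (L+ε) * (t - s) := by
    intro s t hs ht hst
    have hd : Filter.Tendsto (fun k => dist (g k s) (g k t)) Filter.atTop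
        (nhds (dist (P s) (P t))) := (hP s).dist (hP t)
    have hb : ∀ k : ℕ, dist (g k s) (g k t) ≤ (L+ε)*(t-s) + (L+ε)*(1/2:ℝ)^k := by
      intro k
      have h2k : (0:ℝ) < 2^k := by positivity
      have hij : ⌊s * 2^k⌋₊ ≤ ⌊t * 2^k⌋₊ :=
        Nat.floor_le_floor (mul_le_mul_of_nonneg_right hst h2k.le)
      have h1 : (⌊t * 2^k⌋₊:ℝ) ≤ t*2^k := Nat.floor_le (mul_nonneg ht.1 h2k.le)
      have h2 : s*2^k - 1 ≤ (⌊s * 2^k⌋₊:ℝ) := by linarith [Nat.lt_floor_add_one (s*2^k)]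
      have h3 := key2 k ⌊s * 2^k⌋₊ ⌊t * 2^k⌋₊ hij
      have h4 : ((⌊t * 2^k⌋₊:ℝ) - (⌊s * 2^k⌋₊:ℝ)) * A k ≤ ((t-s)*2^k + 1) * A k := by
        apply mul_le_mul_of_nonneg_right _ (hA0 k)
        linarith
      have h5 : (2:ℝ)^k * A k ≤ L + ε := by
        have e : (2:ℝ)^k * (1/2:ℝ)^k = 1 := by
          rw [← mul_pow]; norm_num
        have e2 : (0:ℝ) ≤ (2:ℝ)^k * (ε * (1/4:ℝ)^k) := by positivity
        simp only [hA]
        nlinarith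
      have h6 : ((t-s)*2^k + 1) * A k ≤ (L+ε)*(t-s) + A k := by
        have e : ((t-s)*2^k+1)*A k = (t-s)*((2:ℝ)^k * A k) + A k := by ring
        rw [e]
        have := mul_le_mul_of_nonneg_left h5 (by linarith : (0:ℝ) ≤ t - s)
        linarith
      have h7 := hAle k
      have e : dist (g k s) (g k t) = Dlim (f k ⌊s * 2 ^ k⌋₊) (f k ⌊t * 2 ^ k⌋₊) := rfl
      rw [e]
      linarith
    have hc0 : Filter.Tendsto (fun k : ℕ => (L+ε)*(1/2:ℝ)^k) Filter.atTop (nhds 0) := by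
      have := (tendsto_pow_atTop_nhds_zero_of_lt_one
        (by norm_num : (0:ℝ) ≤ 1/2) (by norm_num : (1/2:ℝ) < 1)).const_mul (L+ε)
      simpa using this
    have hc : Filter.Tendsto (fun k : ℕ => (L+ε)*(t-s) + (L+ε)*(1/2:ℝ)^k) Filter.atTop
        (nhds ((L+ε)*(t-s) + 0)) :=
      (tendsto_const_nhds : Filter.Tendsto (fun _ : ℕ => (L+ε)*(t-s)) Filter.atTop _).add hc0
    have hfin := le_of_tendsto_of_tendsto' hd hc hb
    rw [add_zero] at hfin
    exact hfin
  have hPcont : ContinuousOn P (Set.Icc 0 1) := by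
    rw [Metric.continuousOn_iff]
    intro b hb ε' hε'
    have hden : (0:ℝ) < L + ε + 1 := by linarith
    refine ⟨ε' / (L + ε + 1), by positivity, fun a ha hab => ?_⟩
    have habs : dist (P a) (P b) ≤ (L+ε) * |b - a| := by
      rcases le_total a b with h | h
      · have h2 := hlip a b ha hb h
        rw [abs_of_nonneg (by linarith : (0:ℝ) ≤ b - a)]
        exact h2
      · have h2 := hlip b a hb ha h
        have e : dist (P a) (P b) = Dlim (P b) (P a) := hsymm (P a) (P b)
        rw [e, abs_of_nonpos (by linarith : b - a ≤ 0)]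
        linarith
    have hab' : |a - b| < ε' / (L+ε+1) := by rwa [Real.dist_eq] at hab
    have hlt : (L+ε) * |b-a| < ε' := by
      rw [abs_sub_comm b a]
      have h2 : (L+ε) * |a-b| ≤ (L+ε) * (ε'/(L+ε+1)) :=
        mul_le_mul_of_nonneg_left hab'.le hLε
      have h3 : (L+ε) * (ε'/(L+ε+1)) < ε' := by
        rw [mul_div_assoc', div_lt_iff₀ hden]
        nlinarith
      linarith
    linarith
  refine ⟨P, hPcont, hP0, hP1, ?_⟩
  unfold pathVar
  apply iSup_le
  rintro ⟨n, ⟨u, humono, humem⟩⟩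
  dsimp only
  calc (∑ i ∈ Finset.range n, ENNReal.ofReal (Dlim (P (u i)) (P (u (i+1)))))
      ≤ ∑ i ∈ Finset.range n, ENNReal.ofReal ((L+ε) * (u (i+1) - u i)) := by
        refine Finset.sum_le_sum (fun i _ => ENNReal.ofReal_le_ofReal ?_)
        exact hlip (u i) (u (i+1)) (humem i) (humem (i+1)) (humono (Nat.le_succ i))
    _ = ENNReal.ofReal (∑ i ∈ Finset.range n, (L+ε) * (u (i+1) - u i)) := by
        rw [ENNReal.ofReal_sum_of_nonneg]
        intro i _
        exact mul_nonneg hLε (by linarith [humono (Nat.le_succ i)])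
    _ = ENNReal.ofReal ((L+ε) * (u n - u 0)) := by
        rw [← Finset.mul_sum, Finset.sum_range_sub]
    _ ≤ ENNReal.ofReal (L + ε) := by
        apply ENNReal.ofReal_le_ofReal
        have h1 := (humem n).1
        have h2 := (humem n).2
        have h3 := (humem 0).1
        have h4 := (humem 0).2
        have h5 : (L+ε)*(u n - u 0) ≤ (L+ε)*1 :=
          mul_le_mul_of_nonneg_left (by linarith) hLε
        linarith
    _ = ENNReal.ofReal (Dlim x y + ε) := by rw [hL]
end

section
/- Let $V \subset U \subset \mathbb{C}$ be open sets. Let $\{D^n\}_{n \in \mathbb{N}}$ be continuous length metrics on $U$ converging locally uniformly on $U \times U$ to a continuous length metric $D$ on $U$. Suppose also that the internal metrics $D^n(\cdot, \cdot; \overline{V})$ converge uniformly on $\overline{V} \times \overline{V}$ to a continuous length metric $\widetilde{D}$ on $\overline{V}$. Then the internal metrics on the open set $V$ agree: $D(\cdot, \cdot; V) = \widetilde{D}(\cdot, \cdot; V)$. -/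
open scoped ENNReal
open Filter

/-- The internal metric of the distance function `d` on `Y ⊆ ℂ`: the infimum of
`d`-lengths of continuous paths from `x` to `y` staying in `Y`. -/
noncomputable def intDist (d : ℂ → ℂ → ℝ) (Y : Set ℂ) (x y : ℂ) : ℝ≥0∞ :=
  ⨅ (P : ℝ → ℂ) (_ : ContinuousOn P (Set.Icc 0 1) ∧ P 0 = x ∧ P 1 = y ∧
      ∀ t ∈ Set.Icc (0 : ℝ) 1, P t ∈ Y),
    pathVar (fun a b => ENNReal.ofReal (d a b)) P (Set.Icc 0 1)

/-- `d` is a metric on the subset `S`. -/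
def IsMetricOn (d : ℂ → ℂ → ℝ) (S : Set ℂ) : Prop :=
  (∀ x ∈ S, ∀ y ∈ S, d x y = d y x) ∧
  (∀ x ∈ S, ∀ y ∈ S, ∀ z ∈ S, d x z ≤ d x y + d y z) ∧
  (∀ x ∈ S, ∀ y ∈ S, (d x y = 0 ↔ x = y)) ∧ (∀ x ∈ S, ∀ y ∈ S, 0 ≤ d x y)

/-- `d` induces the Euclidean topology on `S`: the identity map is a homeomorphism. -/
def InducesEuclideanOn (d : ℂ → ℂ → ℝ) (S : Set ℂ) : Prop :=
  ∀ x ∈ S, (∀ ε > (0 : ℝ), ∃ δ > (0 : ℝ), ∀ y ∈ S, dist x y < δ → d x y < ε) ∧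
           (∀ ε > (0 : ℝ), ∃ δ > (0 : ℝ), ∀ y ∈ S, d x y < δ → dist x y < ε)

/-- `d` is a length metric on `S`: distances between points of `S` are approximated by
lengths of continuous paths in `S`. -/
def IsLengthOn (d : ℂ → ℂ → ℝ) (S : Set ℂ) : Prop :=
  ∀ x ∈ S, ∀ y ∈ S, ∀ ε > (0 : ℝ), ∃ P : ℝ → ℂ,
    ContinuousOn P (Set.Icc 0 1) ∧ P 0 = x ∧ P 1 = y ∧
    (∀ t ∈ Set.Icc (0 : ℝ) 1, P t ∈ S) ∧
    pathVar (fun a b => ENNReal.ofReal (d a b)) P (Set.Icc 0 1) ≤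
      ENNReal.ofReal (d x y + ε)

lemma ofReal_sum_le (g : ℕ → ℝ) (m : ℕ) :
    ENNReal.ofReal (∑ j ∈ Finset.range m, g j) ≤ ∑ j ∈ Finset.range m, ENNReal.ofReal (g j) := by
  induction m with
  | zero => simp
  | succ m ih =>
    rw [Finset.sum_range_succ, Finset.sum_range_succ]
    exact le_trans ENNReal.ofReal_add_le (add_le_add ih le_rfl)

lemma single_le_pathVar (d : ℂ → ℂ → ℝ) (P : ℝ → ℂ) {t : ℝ} (ht : t ∈ Set.Icc (0:ℝ) 1) :
    ENNReal.ofReal (d (P 0) (P t)) ≤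
      pathVar (fun a b => ENNReal.ofReal (d a b)) P (Set.Icc 0 1) := by
  have hu : Monotone (fun i : ℕ => if i = 0 then (0:ℝ) else t) := by
    intro a b hab
    by_cases ha : a = 0
    · by_cases hb : b = 0 <;> simp [ha, hb, ht.1]
    · have hb : b ≠ 0 := by omega
      simp [ha, hb]
  have hmem : ∀ i, (if i = 0 then (0:ℝ) else t) ∈ Set.Icc (0:ℝ) 1 := by
    intro i; by_cases hi : i = 0 <;> simp [hi, ht.1, ht.2, ht]
  have h := le_iSup (fun p : ℕ × {u : ℕ → ℝ // Monotone u ∧ ∀ i, u i ∈ Set.Icc (0:ℝ) 1} =>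
      ∑ i ∈ Finset.range p.1, ENNReal.ofReal (d (P (p.2.1 i)) (P (p.2.1 (i+1)))))
      (⟨1, ⟨_, hu, hmem⟩⟩)
  simpa [pathVar] using h

lemma chain_le (d : ℂ → ℂ → ℝ) (q : ℕ → ℂ) (S : Set ℂ) (hq : ∀ j, q j ∈ S)
    (hrefl : ∀ x ∈ S, d x x = 0)
    (htri : ∀ x ∈ S, ∀ y ∈ S, ∀ z ∈ S, d x z ≤ d x y + d y z) :
    ∀ m, d (q 0) (q m) ≤ ∑ j ∈ Finset.range m, d (q j) (q (j+1)) := by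
  intro m
  induction m with
  | zero => simp [hrefl _ (hq 0)]
  | succ m ih =>
    rw [Finset.sum_range_succ]
    calc d (q 0) (q (m+1)) ≤ d (q 0) (q m) + d (q m) (q (m+1)) :=
          htri _ (hq 0) _ (hq m) _ (hq (m+1))
    _ ≤ _ := by linarith

lemma pathVar_le_pathVar (d d' : ℂ → ℂ → ℝ) (P : ℝ → ℂ) (η : ℝ) (hη : 0 < η)
    (hrefl : ∀ s ∈ Set.Icc (0:ℝ) 1, d (P s) (P s) = 0)
    (htri : ∀ s ∈ Set.Icc (0:ℝ) 1, ∀ t ∈ Set.Icc (0:ℝ) 1, ∀ r ∈ Set.Icc (0:ℝ) 1,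
      d (P s) (P r) ≤ d (P s) (P t) + d (P t) (P r))
    (hagree : ∀ s ∈ Set.Icc (0:ℝ) 1, ∀ t ∈ Set.Icc (0:ℝ) 1, |s - t| ≤ η →
      d (P s) (P t) = d' (P s) (P t)) :
    pathVar (fun a b => ENNReal.ofReal (d a b)) P (Set.Icc 0 1) ≤
    pathVar (fun a b => ENNReal.ofReal (d' a b)) P (Set.Icc 0 1) := by
  rw [pathVar]
  apply iSup_le
  rintro ⟨n, u, hu_mono, hu_mem⟩
  obtain ⟨m₀, hm₀⟩ := exists_nat_one_div_lt hη
  set m : ℕ := m₀ + 1 with hm_def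
  have hm0 : 0 < m := Nat.succ_pos _
  have hmR : (0:ℝ) < m := by exact_mod_cast hm0
  have hmη : 1 / (m:ℝ) ≤ η := by
    apply le_of_lt; exact_mod_cast hm₀
  have hΔ : ∀ i, 0 ≤ u (i+1) - u i := fun i => sub_nonneg.2 (hu_mono (Nat.le_succ i))
  set w : ℕ → ℝ := fun k => u (k / m) + ((k % m : ℕ) : ℝ) * (u (k / m + 1) - u (k / m)) / m
    with hw_def
  have hstep : ∀ k, w (k+1) = w k + (u (k/m + 1) - u (k/m)) / m := by
    intro k
    obtain ⟨i, j, hjm, hk⟩ : ∃ i j, j < m ∧ k = m*i+j :=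
      ⟨k/m, k%m, Nat.mod_lt _ hm0, (Nat.div_add_mod k m).symm⟩
    have hdiv : k/m = i := by rw [hk, Nat.mul_add_div hm0, Nat.div_eq_of_lt hjm, Nat.add_zero]
    have hmod : k%m = j := by rw [hk, Nat.mul_add_mod, Nat.mod_eq_of_lt hjm]
    by_cases hc : j + 1 < m
    · have hk1 : k + 1 = m * i + (j+1) := by omega
      have hdiv1 : (k+1)/m = i := by
        rw [hk1, Nat.mul_add_div hm0, Nat.div_eq_of_lt hc, Nat.add_zero]
      have hmod1 : (k+1)%m = j + 1 := by rw [hk1, Nat.mul_add_mod, Nat.mod_eq_of_lt hc]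
      simp only [hw_def, hdiv, hmod, hdiv1, hmod1]
      push_cast
      ring
    · have hjm1 : j + 1 = m := by omega
      have hk1 : k + 1 = m * (i + 1) := by rw [Nat.mul_succ]; omega
      have hdiv1 : (k+1)/m = i + 1 := by rw [hk1, Nat.mul_div_cancel_left _ hm0]
      have hmod1 : (k+1)%m = 0 := by rw [hk1, Nat.mul_mod_right]
      have hjR : (j : ℝ) = (m:ℝ) - 1 := by
        have : ((j:ℝ) + 1) = (m:ℝ) := by exact_mod_cast congrArg (Nat.cast (R := ℝ)) hjm1
        linarith
      simp only [hw_def, hdiv, hmod, hdiv1, hmod1, Nat.cast_zero]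
      rw [hjR]
      field_simp
      ring
  have hw_mem' : ∀ k, u (k/m) ≤ w k ∧ w k ≤ u (k/m + 1) := by
    intro k
    have hjm : ((k % m : ℕ) : ℝ) < m := by exact_mod_cast Nat.mod_lt k hm0
    have hjnn : (0:ℝ) ≤ ((k % m : ℕ) : ℝ) := Nat.cast_nonneg _
    have hD := hΔ (k/m)
    constructor
    · have h : 0 ≤ ((k % m : ℕ) : ℝ) * (u (k/m + 1) - u (k/m)) / m := by positivity
      simp only [hw_def]; linarith
    · have h : ((k % m : ℕ) : ℝ) * (u (k/m + 1) - u (k/m)) / m ≤ u (k/m + 1) - u (k/m) := by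
        rw [div_le_iff₀ hmR]; nlinarith
      simp only [hw_def]; linarith
  have hw_mem : ∀ k, w k ∈ Set.Icc (0:ℝ) 1 := fun k =>
    ⟨le_trans (hu_mem (k/m)).1 (hw_mem' k).1, le_trans (hw_mem' k).2 (hu_mem (k/m + 1)).2⟩
  have hw_mono : Monotone w := by
    apply monotone_nat_of_le_succ
    intro k
    rw [hstep k]
    have h : 0 ≤ (u (k/m + 1) - u (k/m)) / m := div_nonneg (hΔ _) hmR.le
    linarith
  have hw_step_size : ∀ k, |w k - w (k+1)| ≤ η := by
    intro k
    rw [hstep k]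
    have h1 : (0:ℝ) ≤ u (k/m) := (hu_mem _).1
    have h2 : u (k/m + 1) ≤ 1 := (hu_mem _).2
    have hD := hΔ (k/m)
    have hb : (u (k/m + 1) - u (k/m)) / m ≤ 1 / m := by gcongr; linarith
    have hnn : 0 ≤ (u (k/m + 1) - u (k/m)) / m := div_nonneg hD hmR.le
    rw [abs_sub_comm, add_sub_cancel_left, abs_of_nonneg hnn]
    exact le_trans hb hmη
  have hblock : ∀ i, w (m*i) = u i := by
    intro i
    simp only [hw_def, Nat.mul_div_cancel_left _ hm0, Nat.mul_mod_right, Nat.cast_zero]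
    ring
  -- per-block bound
  have hblock_le : ∀ i, ENNReal.ofReal (d (P (u i)) (P (u (i+1)))) ≤
      ∑ j ∈ Finset.range m, ENNReal.ofReal (d (P (w (m*i + j))) (P (w (m*i + j + 1)))) := by
    intro i
    have hq : ∀ j, P (w (m*i + j)) ∈ P '' Set.Icc (0:ℝ) 1 :=
      fun j => Set.mem_image_of_mem _ (hw_mem _)
    have hrefl' : ∀ x ∈ P '' Set.Icc (0:ℝ) 1, d x x = 0 := by
      rintro x ⟨s, hs, rfl⟩; exact hrefl s hs
    have htri' : ∀ x ∈ P '' Set.Icc (0:ℝ) 1, ∀ y ∈ P '' Set.Icc (0:ℝ) 1,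
        ∀ z ∈ P '' Set.Icc (0:ℝ) 1, d x z ≤ d x y + d y z := by
      rintro x ⟨s, hs, rfl⟩ y ⟨t, ht, rfl⟩ z ⟨r, hr, rfl⟩; exact htri s hs t ht r hr
    have hch := chain_le d (fun j => P (w (m*i + j))) _ hq hrefl' htri' m
    simp only [Nat.add_zero] at hch
    have hend : m*i + m = m*(i+1) := by ring
    calc ENNReal.ofReal (d (P (u i)) (P (u (i+1))))
        = ENNReal.ofReal (d (P (w (m*i))) (P (w (m*i + m)))) := by rw [hend, hblock, hblock]
      _ ≤ ENNReal.ofReal (∑ j ∈ Finset.range m, d (P (w (m*i + j))) (P (w (m*i + j + 1)))) :=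
          ENNReal.ofReal_le_ofReal hch
      _ ≤ _ := ofReal_sum_le _ _
  have hsum : ∀ N, (∑ i ∈ Finset.range N, ENNReal.ofReal (d (P (u i)) (P (u (i+1))))) ≤
      ∑ k ∈ Finset.range (m*N), ENNReal.ofReal (d (P (w k)) (P (w (k+1)))) := by
    intro N
    induction N with
    | zero => simp
    | succ N ih =>
      rw [Finset.sum_range_succ, Nat.mul_succ, Finset.sum_range_add]
      exact add_le_add ih (hblock_le N)
  calc (∑ i ∈ Finset.range n, ENNReal.ofReal (d (P (u i)) (P (u (i+1)))))
      ≤ ∑ k ∈ Finset.range (m*n), ENNReal.ofReal (d (P (w k)) (P (w (k+1)))) := hsum n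
    _ = ∑ k ∈ Finset.range (m*n), ENNReal.ofReal (d' (P (w k)) (P (w (k+1)))) := by
        apply Finset.sum_congr rfl
        intro k _
        rw [hagree _ (hw_mem k) _ (hw_mem (k+1)) (hw_step_size k)]
    _ ≤ pathVar (fun a b => ENNReal.ofReal (d' a b)) P (Set.Icc 0 1) := by
        rw [pathVar]
        exact le_iSup (fun p : ℕ × {u : ℕ → ℝ // Monotone u ∧ ∀ i, u i ∈ Set.Icc (0:ℝ) 1} =>
          ∑ i ∈ Finset.range p.1, ENNReal.ofReal (d' (P (p.2.1 i)) (P (p.2.1 (i+1)))))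
          ⟨m*n, ⟨w, hw_mono, hw_mem⟩⟩


/-- Compatibility of limits of internal metrics: if continuous length metrics `Dₙ` on an
open set `U` converge locally uniformly to a continuous length metric `D`, and the
internal metrics `Dₙ(·,·; closure V)` converge uniformly on `closure V` to a continuous
length metric `D̃`, then the internal metrics of `D` and `D̃` on the open set `V` agree. -/
theorem internal_metrics_of_limits_agree
    (U V : Set ℂ) (hU : IsOpen U) (hV : IsOpen V) (hVU : V ⊆ U)
    (D : ℕ → ℂ → ℂ → ℝ) (Dl : ℂ → ℂ → ℝ) (Dt : ℂ → ℂ → ℝ)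
    (hDn_metric : ∀ n, IsMetricOn (D n) U)
    (hDn_top : ∀ n, InducesEuclideanOn (D n) U)
    (hDn_length : ∀ n, IsLengthOn (D n) U)
    (hDl_metric : IsMetricOn Dl U) (hDl_top : InducesEuclideanOn Dl U)
    (hDl_length : IsLengthOn Dl U)
    (hconv : TendstoLocallyUniformlyOn (fun n (p : ℂ × ℂ) => D n p.1 p.2)
      (fun p : ℂ × ℂ => Dl p.1 p.2) atTop (U ×ˢ U))
    (hDt_metric : IsMetricOn Dt (closure V)) (hDt_top : InducesEuclideanOn Dt (closure V))
    (hDt_length : IsLengthOn Dt (closure V))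
    (hconv2 : ∀ ε > (0 : ℝ), ∀ᶠ n in atTop, ∀ z ∈ closure V, ∀ w ∈ closure V,
      intDist (D n) (closure V) z w ≤ ENNReal.ofReal (Dt z w + ε) ∧
      ENNReal.ofReal (Dt z w) ≤ intDist (D n) (closure V) z w + ENNReal.ofReal ε) :
    ∀ z ∈ V, ∀ w ∈ V, intDist Dl V z w = intDist Dt V z w := by
  obtain ⟨hDlsymm, hDltri, hDliff, hDlpos⟩ := hDl_metric
  obtain ⟨hDtsymm, hDttri, hDtiff, hDtpos⟩ := hDt_metric
  -- Part 1 : Dl ≤ Dt on V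
  have key2 : ∀ v ∈ V, ∀ w ∈ V, Dl v w ≤ Dt v w := by
    intro v hv w hw
    refine le_of_forall_pos_le_add ?_
    intro ε hε
    have hptw : Tendsto (fun n => D n v w) atTop (nhds (Dl v w)) :=
      hconv.tendsto_at (Set.mk_mem_prod (hVU hv) (hVU hw))
    have h1 := Metric.tendsto_nhds.mp hptw (ε/2) (by linarith)
    have h2 := hconv2 (ε/2) (by linarith)
    obtain ⟨n, hn1, hn2⟩ := (h1.and h2).exists
    have hvc : v ∈ closure V := subset_closure hv
    have hwc : w ∈ closure V := subset_closure hw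
    have hlow : ENNReal.ofReal (D n v w) ≤ intDist (D n) (closure V) v w := by
      rw [intDist]
      refine le_iInf fun P => le_iInf fun hP => ?_
      have h := single_le_pathVar (D n) P (t := 1) (by norm_num)
      rwa [hP.2.1, hP.2.2.1] at h
    have h3 : ENNReal.ofReal (D n v w) ≤ ENNReal.ofReal (Dt v w + ε/2) :=
      le_trans hlow (hn2 v hvc w hwc).1
    have hDn_le : D n v w ≤ Dt v w + ε/2 :=
      (ENNReal.ofReal_le_ofReal_iff (by have := hDtpos v hvc w hwc; linarith)).mp h3
    have h4 : |D n v w - Dl v w| < ε/2 := by simpa [Real.dist_eq] using hn1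
    have := abs_lt.mp h4
    linarith
  -- Part 2 : local agreement
  have key1 : ∀ x ∈ V, ∃ ρ > (0:ℝ), Metric.ball x ρ ⊆ V ∧
      ∀ v ∈ Metric.ball x ρ, ∀ w ∈ Metric.ball x ρ, Dl v w = Dt v w := by
    intro x hx
    have hxU : x ∈ U := hVU hx
    obtain ⟨r, hr0, hrV⟩ := Metric.isOpen_iff.mp hV x hx
    set ρ' : ℝ := r/2 with hρ'def
    have hρ'0 : (0:ℝ) < ρ' := by positivity
    have hball' : Metric.closedBall x ρ' ⊆ V := fun y hy =>
      hrV (lt_of_le_of_lt (Metric.mem_closedBall.mp hy) (by rw [hρ'def]; linarith))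
    obtain ⟨δ0, hδ00, hδ0⟩ := (hDl_top x hxU).2 ρ' hρ'0
    obtain ⟨ρ1, hρ10, hρ1⟩ := (hDl_top x hxU).1 (δ0/8) (by linarith)
    set ρ : ℝ := min ρ1 ρ' with hρdef
    have hρ0 : 0 < ρ := lt_min hρ10 hρ'0
    have hballV : Metric.ball x ρ ⊆ V := fun y hy => hball'
      (Metric.mem_closedBall.mpr (le_of_lt (lt_of_lt_of_le (Metric.mem_ball.mp hy)
        (min_le_right _ _))))
    refine ⟨ρ, hρ0, hballV, ?_⟩
    intro v hv w hw
    have hvV : v ∈ V := hballV hv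
    have hwV : w ∈ V := hballV hw
    have hvU : v ∈ U := hVU hvV
    have hwU : w ∈ U := hVU hwV
    refine le_antisymm (key2 v hvV w hwV) ?_
    -- Dt v w ≤ Dl v w
    refine le_of_forall_pos_le_add ?_
    intro ε' hε'
    set ε : ℝ := min (ε'/3) (δ0/16) with hεdef
    have hε0 : 0 < ε := lt_min (by linarith) (by linarith)
    have hε8 : ε < δ0/8 := lt_of_le_of_lt (min_le_right _ _) (by linarith)
    have hε3 : 3*ε ≤ ε' := by
      have := min_le_left (ε'/3) (δ0/16); linarith
    set C : Set (ℂ × ℂ) := Metric.closedBall x ρ' ×ˢ Metric.closedBall x ρ' with hCdef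
    have hCcomp : IsCompact C := (isCompact_closedBall _ _).prod (isCompact_closedBall _ _)
    have hCsub : C ⊆ U ×ˢ U :=
      Set.prod_mono (hball'.trans hVU) (hball'.trans hVU)
    have hunif := (tendstoLocallyUniformlyOn_iff_forall_isCompact (hU.prod hU)).mp hconv
      C hCsub hCcomp
    have h1 := Metric.tendstoUniformlyOn_iff.mp hunif ε hε0
    have h2 := hconv2 ε hε0
    obtain ⟨n, hn1, hn2⟩ := (h1.and h2).exists
    have hvC' : v ∈ Metric.closedBall x ρ' :=
      Metric.mem_closedBall.mpr (le_of_lt (lt_of_lt_of_le (Metric.mem_ball.mp hv)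
        (min_le_right _ _)))
    have hwC' : w ∈ Metric.closedBall x ρ' :=
      Metric.mem_closedBall.mpr (le_of_lt (lt_of_lt_of_le (Metric.mem_ball.mp hw)
        (min_le_right _ _)))
    -- Dl v w is small
    have hDlv : Dl x v < δ0/8 := hρ1 v hvU (by
      rw [dist_comm]; exact lt_of_lt_of_le (Metric.mem_ball.mp hv) (min_le_left _ _))
    have hDlw : Dl x w < δ0/8 := hρ1 w hwU (by
      rw [dist_comm]; exact lt_of_lt_of_le (Metric.mem_ball.mp hw) (min_le_left _ _))
    have hDlvw : Dl v w < δ0/4 := by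
      have ht := hDltri v hvU x hxU w hwU
      have hs := hDlsymm v hvU x hxU
      linarith
    -- a near-geodesic path for D n
    obtain ⟨P, hPc, hP0, hP1, hPU, hPvar⟩ := hDn_length n v hvU w hwU ε hε0
    have hDnpos := (hDn_metric n).2.2.2
    have hvwC : (v, w) ∈ C := Set.mk_mem_prod hvC' hwC'
    have hDn_vw : |Dl v w - D n v w| < ε := by
      have := hn1 (v, w) hvwC
      simpa [Real.dist_eq] using this
    -- the path stays in the ball
    have hstay : ∀ t ∈ Set.Icc (0:ℝ) 1, P t ∈ Metric.ball x ρ' := by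
      by_contra hcon
      push_neg at hcon
      obtain ⟨t1, ht1, ht1'⟩ := hcon
      have hf : ContinuousOn (fun t => dist (P t) x) (Set.Icc 0 t1) :=
        (continuous_id.dist continuous_const).comp_continuousOn
          (hPc.mono (Set.Icc_subset_Icc le_rfl ht1.2))
      have hI : ρ' ∈ Set.Icc (dist (P 0) x) (dist (P t1) x) := by
        constructor
        · rw [hP0]
          exact le_of_lt (lt_of_lt_of_le (Metric.mem_ball.mp hv) (min_le_right _ _))
        · simpa [Metric.mem_ball, not_lt] using ht1'
      obtain ⟨t0, ht0mem, ht0⟩ := intermediate_value_Icc ht1.1 hf hI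
      have ht0' : dist (P t0) x = ρ' := ht0
      have ht0I : t0 ∈ Set.Icc (0:ℝ) 1 := Set.Icc_subset_Icc le_rfl ht1.2 ht0mem
      have hzU : P t0 ∈ U := hPU t0 ht0I
      have hzC : P t0 ∈ Metric.closedBall x ρ' := Metric.mem_closedBall.mpr (le_of_eq ht0')
      have hxz : δ0 ≤ Dl x (P t0) := by
        by_contra h
        push_neg at h
        have hlt := hδ0 (P t0) hzU h
        rw [dist_comm, ht0'] at hlt
        exact lt_irrefl _ hlt
      have htri1 := hDltri x hxU v hvU (P t0) hzU
      have hvzC : (v, P t0) ∈ C := Set.mk_mem_prod hvC' hzC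
      have h3 : |Dl v (P t0) - D n v (P t0)| < ε := by
        have := hn1 (v, P t0) hvzC
        simpa [Real.dist_eq] using this
      have h4 : ENNReal.ofReal (D n v (P t0)) ≤ ENNReal.ofReal (D n v w + ε) := by
        refine le_trans ?_ hPvar
        have h := single_le_pathVar (D n) P ht0I
        rwa [hP0] at h
      have h5 : D n v (P t0) ≤ D n v w + ε :=
        (ENNReal.ofReal_le_ofReal_iff (by have := hDnpos v hvU w hwU; linarith)).mp h4
      have h6 := abs_lt.mp hDn_vw
      have h7 := abs_lt.mp h3
      linarith
    -- conclude
    have hPclV : ∀ t ∈ Set.Icc (0:ℝ) 1, P t ∈ closure V := fun t ht =>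
      subset_closure (hball' (Metric.ball_subset_closedBall (hstay t ht)))
    have hint : intDist (D n) (closure V) v w ≤ ENNReal.ofReal (D n v w + ε) := by
      rw [intDist]
      exact iInf_le_of_le P (iInf_le_of_le ⟨hPc, hP0, hP1, hPclV⟩ hPvar)
    have h6 := (hn2 v (subset_closure hvV) w (subset_closure hwV)).2
    have h7 : ENNReal.ofReal (Dt v w) ≤ ENNReal.ofReal (D n v w + ε + ε) := by
      refine le_trans h6 (le_trans (add_le_add hint le_rfl) ?_)
      rw [← ENNReal.ofReal_add (by have := hDnpos v hvU w hwU; linarith) hε0.le]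
    have h8 : Dt v w ≤ D n v w + 2*ε := by
      have := (ENNReal.ofReal_le_ofReal_iff
        (by have := hDnpos v hvU w hwU; linarith)).mp h7
      linarith
    have h9 := abs_lt.mp hDn_vw
    linarith
  -- Part 3 : assembly
  intro z hz w hw
  rw [intDist, intDist]
  refine iInf_congr fun P => ?_
  refine iInf_congr_Prop Iff.rfl fun hP => ?_
  obtain ⟨hPc, hP0, hP1, hPV⟩ := hP
  -- a uniform agreement scale along the path
  have hlocal : ∀ t : Set.Icc (0:ℝ) 1, ∃ r > (0:ℝ), ∀ s ∈ Set.Icc (0:ℝ) 1,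
      dist s (t:ℝ) < r → ∀ s' ∈ Set.Icc (0:ℝ) 1, dist s' (t:ℝ) < r →
      Dl (P s) (P s') = Dt (P s) (P s') := by
    intro t
    obtain ⟨ρ, hρ0, hρV, hρeq⟩ := key1 (P t) (hPV t t.2)
    have hc : ContinuousWithinAt P (Set.Icc 0 1) t := hPc t t.2
    obtain ⟨r, hr0, hr⟩ := Metric.continuousWithinAt_iff.mp hc ρ hρ0
    exact ⟨r, hr0, fun s hs hsr s' hs' hs'r =>
      hρeq _ (Metric.mem_ball.mpr (hr hs hsr)) _ (Metric.mem_ball.mpr (hr hs' hs'r))⟩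
  choose r hr0 hrP using hlocal
  have hcover : Set.Icc (0:ℝ) 1 ⊆ ⋃ t : Set.Icc (0:ℝ) 1, Metric.ball (t:ℝ) (r t) :=
    fun s hs => Set.mem_iUnion.mpr ⟨⟨s, hs⟩, Metric.mem_ball_self (hr0 _)⟩
  obtain ⟨δ, hδ0, hδ⟩ := lebesgue_number_lemma_of_metric isCompact_Icc
    (fun t => Metric.isOpen_ball) hcover
  have hagree : ∀ s ∈ Set.Icc (0:ℝ) 1, ∀ s' ∈ Set.Icc (0:ℝ) 1, |s - s'| ≤ δ/2 →
      Dl (P s) (P s') = Dt (P s) (P s') := by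
    intro s hs s' hs' hss'
    obtain ⟨t, ht⟩ := hδ s hs
    have hsmem := ht (Metric.mem_ball_self hδ0)
    have hs'mem := ht (by
      rw [Metric.mem_ball, Real.dist_eq, abs_sub_comm]
      linarith [abs_nonneg (s - s')])
    exact hrP t s hs (Metric.mem_ball.mp hsmem) s' hs' (Metric.mem_ball.mp hs'mem)
  have hPU : ∀ s ∈ Set.Icc (0:ℝ) 1, P s ∈ U := fun s hs => hVU (hPV s hs)
  have hPcl : ∀ s ∈ Set.Icc (0:ℝ) 1, P s ∈ closure V := fun s hs => subset_closure (hPV s hs)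
  refine le_antisymm ?_ ?_
  · exact pathVar_le_pathVar Dl Dt P (δ/2) (by linarith)
      (fun s hs => (hDliff _ (hPU s hs) _ (hPU s hs)).mpr rfl)
      (fun s hs t ht r' hr' => hDltri _ (hPU s hs) _ (hPU t ht) _ (hPU r' hr'))
      hagree
  · exact pathVar_le_pathVar Dt Dl P (δ/2) (by linarith)
      (fun s hs => (hDtiff _ (hPcl s hs) _ (hPcl s hs)).mpr rfl)
      (fun s hs t ht r' hr' => hDttri _ (hPcl s hs) _ (hPcl t ht) _ (hPcl r' hr'))
      (fun s hs t ht h => (hagree s hs t ht h).symm)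
end
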